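/- arXiv:1405.2714 — 8 statements merged into one kernel-verified Lean document; each statement's English description precedes it below -/
import Mathlib

section
/- Suppose I₁, I₂, I₃ are pairwise distinct. If (𝐑, ξ) is a relative equilibrium pair of the second-order model with ξ ≠ 0 and orbital radius R = |𝐑| > 3/2, then 𝐑·ξ = 0, and there exist distinct indices j, k ∈ {1,2,3} such that 𝐑 = ±R e_j and ξ = ±|ξ| e_k; moreover the angular velocity satisfies the modified Kepler formula |ξ|² = 1/R³ + (3 − 9 I_j)/(2R⁵). -/
noncomputable section

open Real

/-- The Euclidean dot product on `ℝ³`. -/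
def dot3 (u v : Fin 3 → ℝ) : ℝ := u 0 * v 0 + u 1 * v 1 + u 2 * v 2

/-- The Euclidean norm on `ℝ³`. -/
def norm3 (u : Fin 3 → ℝ) : ℝ := Real.sqrt (dot3 u u)

/-- The `j`-th standard basis vector of `ℝ³`. -/
def e3 (j : Fin 3) : Fin 3 → ℝ := fun i => if i = j then 1 else 0

/-- The inertia tensor `diag (I₁, I₂, I₃)` applied to a vector. -/
def inertiaApply (I₁ I₂ I₃ : ℝ) (v : Fin 3 → ℝ) : Fin 3 → ℝ :=
  ![I₁ * v 0, I₂ * v 1, I₃ * v 2]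

/-- The gradient of the second-order gravitational potential:
`∇V₂(𝐑) = 𝐑/R³ + 3𝐑/(2R⁵) + 3𝐈𝐑/R⁵ − 15(𝐑·𝐈𝐑)𝐑/(2R⁷)` with `R = |𝐑|`. -/
def gradV2 (I₁ I₂ I₃ : ℝ) (R : Fin 3 → ℝ) : Fin 3 → ℝ :=
  fun i => R i / (norm3 R) ^ 3 + 3 * R i / (2 * (norm3 R) ^ 5)
    + 3 * (inertiaApply I₁ I₂ I₃ R) i / (norm3 R) ^ 5
    - 15 * (dot3 R (inertiaApply I₁ I₂ I₃ R)) * R i / (2 * (norm3 R) ^ 7)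

/-- `(𝐑, ξ)` is a relative equilibrium pair of the second-order model:
`𝐑 ≠ 0`, `(𝐈 − 𝐑𝐑ᵀ)ξ = αξ` for some `α`, and `∇V₂(𝐑) = −(𝐑·ξ)ξ + |ξ|²𝐑`. -/
def IsRelEq (I₁ I₂ I₃ : ℝ) (R ξ : Fin 3 → ℝ) : Prop :=
  R ≠ 0 ∧ ∃ α : ℝ,
    (∀ i, (inertiaApply I₁ I₂ I₃ ξ) i - (dot3 R ξ) * R i = α * ξ i) ∧
    (∀ i, gradV2 I₁ I₂ I₃ R i = -(dot3 R ξ) * ξ i + (dot3 ξ ξ) * R i)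

/-!
Write `∇V₂(𝐑) = a 𝐑 + b 𝐈𝐑` with `b = 3/R⁵ > 0` and `a = 1/R³ + 3/(2R⁵) − 15(𝐑·𝐈𝐑)/(2R⁷)`.
Since `𝐑·𝐈𝐑 ≤ R²/2`, we get `a ≥ (4R² − 9)/(4R⁵) > 0` as soon as `R > 3/2`.
If `c = 𝐑·ξ` were nonzero, projecting the two equilibrium equations on `𝐑` and `ξ` would give
`b (ξ·𝐈ξ) + b (R²|ξ|² − c²) = −a |ξ|²`, whose left side is `≥ 0` and right side `< 0`.
Once `c = 0`, both `ξ` and `𝐑` are eigenvectors of `𝐈`, hence lie on coordinate axes because the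
moments are distinct, on different axes because `c = 0`; and the component of `∇V₂(R eⱼ) = |ξ|² R eⱼ`
along `eⱼ` is the modified Kepler law.
-/

open Function

lemma injective_triple_of_ne {α : Type*} {a b c : α} (hab : a ≠ b) (hbc : b ≠ c) (hac : a ≠ c) :
    Injective ![a, b, c] :=
  Fin.cons_injective_iff.mpr ⟨by simp [hab, hac], injective_pair_iff_ne.mpr hbc⟩

lemma eq_of_diag_mul_eq_smul {ι M₀ : Type*} [Mul M₀] [Zero M₀] [IsRightCancelMulZero M₀]
    {d v : ι → M₀} (hd : Injective d) {μ : M₀} (hv : ∀ i, d i * v i = μ * v i) {i j : ι}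
    (hi : v i ≠ 0) (hj : v j ≠ 0) : i = j :=
  hd ((mul_right_cancel₀ hi (hv i)).trans (mul_right_cancel₀ hj (hv j)).symm)

lemma dot3_comm (u v : Fin 3 → ℝ) : dot3 u v = dot3 v u := by
  unfold dot3; ring

lemma dot3_add_right (u v w : Fin 3 → ℝ) : dot3 u (v + w) = dot3 u v + dot3 u w := by
  simp only [dot3, Pi.add_apply]; ring

lemma dot3_sub_right (u v w : Fin 3 → ℝ) : dot3 u (v - w) = dot3 u v - dot3 u w := by
  simp only [dot3, Pi.sub_apply]; ring

lemma dot3_smul_right (a : ℝ) (u v : Fin 3 → ℝ) : dot3 u (a • v) = a * dot3 u v := by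
  simp only [dot3, Pi.smul_apply, smul_eq_mul]; ring

lemma dot3_smul_left (a : ℝ) (u v : Fin 3 → ℝ) : dot3 (a • u) v = a * dot3 u v := by
  rw [dot3_comm, dot3_smul_right, dot3_comm]

lemma dot3_self_nonneg (u : Fin 3 → ℝ) : 0 ≤ dot3 u u := by
  unfold dot3
  linarith [mul_self_nonneg (u 0), mul_self_nonneg (u 1), mul_self_nonneg (u 2)]

lemma dot3_self_pos {u : Fin 3 → ℝ} (hu : u ≠ 0) : 0 < dot3 u u := by
  refine (dot3_self_nonneg u).lt_of_ne fun h => hu (funext fun i => ?_)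
  unfold dot3 at h
  have h0 := mul_self_nonneg (u 0)
  have h1 := mul_self_nonneg (u 1)
  have h2 := mul_self_nonneg (u 2)
  have hu0 : u 0 = 0 ∧ u 1 = 0 ∧ u 2 = 0 :=
    ⟨mul_self_eq_zero.mp (by linarith), mul_self_eq_zero.mp (by linarith),
      mul_self_eq_zero.mp (by linarith)⟩
  fin_cases i <;> simp [hu0]

lemma norm3_sq (u : Fin 3 → ℝ) : norm3 u ^ 2 = dot3 u u :=
  Real.sq_sqrt (dot3_self_nonneg u)

lemma sq_dot3_le_mul (u v : Fin 3 → ℝ) : dot3 u v ^ 2 ≤ dot3 u u * dot3 v v := by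
  unfold dot3
  nlinarith [sq_nonneg (u 0 * v 1 - u 1 * v 0), sq_nonneg (u 0 * v 2 - u 2 * v 0),
    sq_nonneg (u 1 * v 2 - u 2 * v 1)]

lemma dot3_e3_self (j : Fin 3) : dot3 (e3 j) (e3 j) = 1 := by
  fin_cases j <;> simp [dot3, e3]

lemma norm3_smul_e3 (a : ℝ) (j : Fin 3) : norm3 (a • e3 j) = |a| := by
  rw [norm3, dot3_smul_left, dot3_smul_right, dot3_e3_self, mul_one, ← sq, Real.sqrt_sq_eq_abs]

lemma smul_e3_eq_norm3_smul_or (a : ℝ) (j : Fin 3) :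
    a • e3 j = norm3 (a • e3 j) • e3 j ∨ a • e3 j = (-norm3 (a • e3 j)) • e3 j := by
  rw [norm3_smul_e3]
  rcases abs_choice a with h | h <;> rw [h]
  · exact Or.inl rfl
  · exact Or.inr (by rw [neg_neg])

lemma eq_smul_e3_of_forall_ne_zero {v : Fin 3 → ℝ} {j : Fin 3} (h : ∀ i, v i ≠ 0 → i = j) :
    v = v j • e3 j := by
  funext i
  by_cases hij : i = j
  · simp [hij, e3]
  · simpa [e3, hij] using mt (h i) hij

section

variable {I₁ I₂ I₃ : ℝ}

lemma inertiaApply_apply (v : Fin 3 → ℝ) (i : Fin 3) :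
    inertiaApply I₁ I₂ I₃ v i = ![I₁, I₂, I₃] i * v i := by
  fin_cases i <;> rfl

lemma inertiaApply_smul_e3 (a : ℝ) (j : Fin 3) :
    inertiaApply I₁ I₂ I₃ (a • e3 j) = ![I₁, I₂, I₃] j • a • e3 j := by
  funext i
  by_cases hij : i = j <;> simp [inertiaApply_apply, e3, hij]

lemma dot3_inertiaApply_comm (u v : Fin 3 → ℝ) :
    dot3 u (inertiaApply I₁ I₂ I₃ v) = dot3 v (inertiaApply I₁ I₂ I₃ u) := by
  simp only [dot3, inertiaApply_apply]; ring

lemma dot3_inertiaApply_self_nonneg (h₁ : 0 ≤ I₁) (h₂ : 0 ≤ I₂) (h₃ : 0 ≤ I₃) (v : Fin 3 → ℝ) :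
    0 ≤ dot3 v (inertiaApply I₁ I₂ I₃ v) := by
  simp only [dot3, inertiaApply, Matrix.cons_val_zero, Matrix.cons_val_one, Matrix.cons_val_two,
    Matrix.head_cons, Matrix.tail_cons]
  nlinarith [mul_nonneg h₁ (mul_self_nonneg (v 0)), mul_nonneg h₂ (mul_self_nonneg (v 1)),
    mul_nonneg h₃ (mul_self_nonneg (v 2))]

lemma dot3_inertiaApply_self_le (h₁ : I₁ ≤ 1 / 2) (h₂ : I₂ ≤ 1 / 2) (h₃ : I₃ ≤ 1 / 2)
    (v : Fin 3 → ℝ) : dot3 v (inertiaApply I₁ I₂ I₃ v) ≤ dot3 v v / 2 := by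
  simp only [dot3, inertiaApply, Matrix.cons_val_zero, Matrix.cons_val_one, Matrix.cons_val_two,
    Matrix.head_cons, Matrix.tail_cons]
  nlinarith [mul_nonneg (sub_nonneg.2 h₁) (mul_self_nonneg (v 0)),
    mul_nonneg (sub_nonneg.2 h₂) (mul_self_nonneg (v 1)),
    mul_nonneg (sub_nonneg.2 h₃) (mul_self_nonneg (v 2))]

lemma exists_eq_smul_e3_of_inertiaApply_eq_smul (hd : Injective ![I₁, I₂, I₃])
    {v : Fin 3 → ℝ} (hv : v ≠ 0) {μ : ℝ} (h : inertiaApply I₁ I₂ I₃ v = μ • v) :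
    ∃ (j : Fin 3) (a : ℝ), a ≠ 0 ∧ v = a • e3 j := by
  obtain ⟨j, hj⟩ := Function.ne_iff.mp hv
  have hdiag i : ![I₁, I₂, I₃] i * v i = μ * v i := by
    rw [← inertiaApply_apply, h, Pi.smul_apply, smul_eq_mul]
  exact ⟨j, v j, hj, eq_smul_e3_of_forall_ne_zero fun i hi => eq_of_diag_mul_eq_smul hd hdiag hi hj⟩

def gradV2Radial (I₁ I₂ I₃ : ℝ) (R : Fin 3 → ℝ) : ℝ :=
  1 / norm3 R ^ 3 + 3 / (2 * norm3 R ^ 5)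
    - 15 * dot3 R (inertiaApply I₁ I₂ I₃ R) / (2 * norm3 R ^ 7)

lemma gradV2_eq (R : Fin 3 → ℝ) :
    gradV2 I₁ I₂ I₃ R
      = gradV2Radial I₁ I₂ I₃ R • R + (3 / norm3 R ^ 5) • inertiaApply I₁ I₂ I₃ R := by
  funext i
  simp only [gradV2, gradV2Radial, Pi.add_apply, Pi.smul_apply, smul_eq_mul]
  ring

lemma gradV2Radial_pos (h₁ : I₁ ≤ 1 / 2) (h₂ : I₂ ≤ 1 / 2) (h₃ : I₃ ≤ 1 / 2)
    {R : Fin 3 → ℝ} (hR : 3 / 2 < norm3 R) : 0 < gradV2Radial I₁ I₂ I₃ R := by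
  have hr : 0 < norm3 R := by linarith
  have hK := norm3_sq R ▸ dot3_inertiaApply_self_le h₁ h₂ h₃ R
  have h : gradV2Radial I₁ I₂ I₃ R
      = (2 * norm3 R ^ 4 + 3 * norm3 R ^ 2 - 15 * dot3 R (inertiaApply I₁ I₂ I₃ R))
        / (2 * norm3 R ^ 7) := by
    unfold gradV2Radial; field_simp
  rw [h]
  apply div_pos _ (by positivity)
  nlinarith [mul_pos (pow_pos hr 2) (show 0 < norm3 R ^ 2 - 9 / 4 by nlinarith)]

lemma gradV2_smul_e3 {a : ℝ} (ha : a ≠ 0) (j : Fin 3) :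
    gradV2 I₁ I₂ I₃ (a • e3 j)
      = (1 / |a| ^ 3 + (3 - 9 * ![I₁, I₂, I₃] j) / (2 * |a| ^ 5)) • a • e3 j := by
  have hK : dot3 (a • e3 j) (inertiaApply I₁ I₂ I₃ (a • e3 j)) = ![I₁, I₂, I₃] j * |a| ^ 2 := by
    rw [inertiaApply_smul_e3, dot3_smul_right, dot3_smul_left, dot3_smul_right, dot3_e3_self,
      sq_abs]
    ring
  rw [gradV2_eq, gradV2Radial, hK, inertiaApply_smul_e3, norm3_smul_e3,
    smul_smul (3 / |a| ^ 5), ← add_smul]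
  congr 1
  have habs : |a| ≠ 0 := abs_ne_zero.mpr ha
  field_simp
  ring

lemma exists_inertiaApply_eq_smul_of_gradV2_eq_smul {R : Fin 3 → ℝ} (hR : R ≠ 0) {s : ℝ}
    (h : gradV2 I₁ I₂ I₃ R = s • R) : ∃ μ : ℝ, inertiaApply I₁ I₂ I₃ R = μ • R := by
  have hb : 3 / norm3 R ^ 5 ≠ 0 := by
    have : 0 < norm3 R := Real.sqrt_pos.mpr (dot3_self_pos hR)
    positivity
  refine ⟨(3 / norm3 R ^ 5)⁻¹ * (s - gradV2Radial I₁ I₂ I₃ R), ?_⟩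
  rw [gradV2_eq] at h
  rw [mul_smul, sub_smul, ← h, add_sub_cancel_left, smul_smul, inv_mul_cancel₀ hb, one_smul]

theorem dot3_eq_zero_of_equilibrium (h₁ : 0 ≤ I₁) (h₂ : 0 ≤ I₂) (h₃ : 0 ≤ I₃)
    {R ξ : Fin 3 → ℝ} (hξ : ξ ≠ 0) {a b α : ℝ} (ha : 0 < a) (hb : 0 ≤ b)
    (hA : inertiaApply I₁ I₂ I₃ ξ - dot3 R ξ • R = α • ξ)
    (hB : a • R + b • inertiaApply I₁ I₂ I₃ R = (-dot3 R ξ) • ξ + dot3 ξ ξ • R) :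
    dot3 R ξ = 0 := by
  by_contra hc
  have hAR := congrArg (dot3 R) hA
  have hAξ := congrArg (dot3 ξ) hA
  have hBξ := congrArg (dot3 ξ) hB
  simp only [dot3_sub_right, dot3_add_right, dot3_smul_right] at hAR hAξ hBξ
  rw [dot3_inertiaApply_comm ξ R] at hBξ
  rw [dot3_comm ξ R] at hAξ hBξ
  have hbα : b * α = -(a + b * dot3 R R) :=
    mul_left_cancel₀ hc (by linear_combination hBξ - b * hAR)
  have key : b * dot3 ξ (inertiaApply I₁ I₂ I₃ ξ) + b * (dot3 R R * dot3 ξ ξ - dot3 R ξ ^ 2)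
      = -a * dot3 ξ ξ := by
    linear_combination b * hAξ + dot3 ξ ξ * hbα
  have := mul_nonneg hb (dot3_inertiaApply_self_nonneg h₁ h₂ h₃ ξ)
  have := mul_nonneg hb (sub_nonneg.mpr (sq_dot3_le_mul R ξ))
  have := mul_pos ha (dot3_self_pos hξ)
  linarith

end

theorem stmt0_general (I₁ I₂ I₃ : ℝ)
    (hI₁ : 0 < I₁) (hI₁' : I₁ < 1 / 2)
    (hI₂ : 0 < I₂) (hI₂' : I₂ < 1 / 2)
    (hI₃ : 0 < I₃) (hI₃' : I₃ < 1 / 2)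
    (h12 : I₁ ≠ I₂) (h23 : I₂ ≠ I₃) (h13 : I₁ ≠ I₃)
    (R ξ : Fin 3 → ℝ)
    (hre : IsRelEq I₁ I₂ I₃ R ξ)
    (hξ : ξ ≠ 0)
    (hR : norm3 R > 3 / 2) :
    dot3 R ξ = 0 ∧
    ∃ j k : Fin 3, j ≠ k ∧
      (R = (norm3 R) • e3 j ∨ R = (-(norm3 R)) • e3 j) ∧
      (ξ = (norm3 ξ) • e3 k ∨ ξ = (-(norm3 ξ)) • e3 k) ∧
      dot3 ξ ξ = 1 / (norm3 R) ^ 3 + (3 - 9 * ![I₁, I₂, I₃] j) / (2 * (norm3 R) ^ 5) := by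
  obtain ⟨hR0, α, hA, hB⟩ := hre
  replace hA : inertiaApply I₁ I₂ I₃ ξ - dot3 R ξ • R = α • ξ := funext hA
  replace hB : gradV2 I₁ I₂ I₃ R = (-dot3 R ξ) • ξ + dot3 ξ ξ • R := funext hB
  have hc : dot3 R ξ = 0 :=
    dot3_eq_zero_of_equilibrium hI₁.le hI₂.le hI₃.le hξ
      (gradV2Radial_pos hI₁'.le hI₂'.le hI₃'.le hR) (by positivity) hA (gradV2_eq R ▸ hB)
  rw [hc, zero_smul, sub_zero] at hA
  rw [hc, neg_zero, zero_smul, zero_add] at hB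
  have hd := injective_triple_of_ne h12 h23 h13
  obtain ⟨k, b, hb, rfl⟩ := exists_eq_smul_e3_of_inertiaApply_eq_smul hd hξ hA
  obtain ⟨μ, hμ⟩ := exists_inertiaApply_eq_smul_of_gradV2_eq_smul hR0 hB
  obtain ⟨j, a, ha, rfl⟩ := exists_eq_smul_e3_of_inertiaApply_eq_smul hd hR0 hμ
  refine ⟨hc, j, k, ?_, smul_e3_eq_norm3_smul_or a j, smul_e3_eq_norm3_smul_or b k, ?_⟩
  · rintro rfl
    rw [dot3_smul_left, dot3_smul_right, dot3_e3_self, mul_one] at hc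
    exact mul_ne_zero ha hb hc
  · rw [gradV2_smul_e3 ha] at hB
    rw [norm3_smul_e3]
    exact (smul_left_injective ℝ hR0 hB).symm

theorem stmt0 (I₁ I₂ I₃ : ℝ)
    (hI₁ : 0 < I₁) (hI₁' : I₁ < 1 / 2)
    (hI₂ : 0 < I₂) (hI₂' : I₂ < 1 / 2)
    (hI₃ : 0 < I₃) (hI₃' : I₃ < 1 / 2)
    (hsum : I₁ + I₂ + I₃ = 1)
    (h12 : I₁ ≠ I₂) (h23 : I₂ ≠ I₃) (h13 : I₁ ≠ I₃)
    (R ξ : Fin 3 → ℝ)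
    (hre : IsRelEq I₁ I₂ I₃ R ξ)
    (hξ : ξ ≠ 0)
    (hR : norm3 R > 3 / 2) :
    dot3 R ξ = 0 ∧
    ∃ j k : Fin 3, j ≠ k ∧
      (R = (norm3 R) • e3 j ∨ R = (-(norm3 R)) • e3 j) ∧
      (ξ = (norm3 ξ) • e3 k ∨ ξ = (-(norm3 ξ)) • e3 k) ∧
      dot3 ξ ξ = 1 / (norm3 R) ^ 3 + (3 - 9 * ![I₁, I₂, I₃] j) / (2 * (norm3 R) ^ 5) :=
  stmt0_general I₁ I₂ I₃ hI₁ hI₁' hI₂ hI₂' hI₃ hI₃' h12 h23 h13 R ξ hre hξ hR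
end
end

section
/- Let I₁ > 0 and 0 < I₂ < 1/3. For R > 0 define ξ₁(R)² = (2R² + 3 − 9I₂)/(2R⁵), m(R) = (I₁ + R²)² ξ₁(R)², and S₁(R) = (3R² − I₁)/(R² + I₁) − 4 + 2/(R³ ξ₁(R)²). Then for every R > 0 one has the identity S₁(R) = R · m′(R)/m(R); in particular S₁ vanishes exactly where the squared norm of the angular momentum m(R) along the orthogonal family has a critical point. -/
noncomputable section

/-!
Since `m(R) = (I₁ + R²)² · (2R² + 3 - 9I₂) · (2R⁵)⁻¹`, the quantity `R · m'(R) / m(R)` is the sum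
of `R` times the logarithmic derivatives of the three factors, namely `4R²/(I₁ + R²)`,
`4R²/(2R² + 3 - 9I₂)` and `-5`. The three terms of `S₁(R)` rearrange to exactly this sum.
Both `I₁ + R²` and `ξ₁(R)²` are positive, so `m(R) ≠ 0` and the vanishing of `S₁` is that of `m'`.
-/

lemma logDeriv_mul_sq_add (a b x : ℝ) :
    logDeriv (fun r => a * r ^ 2 + b) x = 2 * a * x / (a * x ^ 2 + b) := by
  have hd : HasDerivAt (fun r => a * r ^ 2 + b) (a * (2 * x)) x := by
    simpa using ((hasDerivAt_pow 2 x).const_mul a).add_const b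
  rw [logDeriv_apply, hd.deriv]
  ring

lemma mul_logDeriv_angularMomentumSq (a b R : ℝ) (hR : R ≠ 0) (ha : a + R ^ 2 ≠ 0)
    (hb : 2 * R ^ 2 + b ≠ 0) :
    R * logDeriv (fun r => (a + r ^ 2) ^ 2 * ((2 * r ^ 2 + b) / (2 * r ^ 5))) R
      = 4 * R ^ 2 / (a + R ^ 2) + 4 * R ^ 2 / (2 * R ^ 2 + b) - 5 := by
  have h5 : 2 * R ^ 5 ≠ 0 := by positivity
  have hsq : logDeriv (fun r => (a + r ^ 2) ^ 2) R = 2 * (2 * R / (a + R ^ 2)) := by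
    have h : (fun r : ℝ => a + r ^ 2) = fun r => 1 * r ^ 2 + a := by ext; ring
    rw [logDeriv_fun_pow (by fun_prop), h, logDeriv_mul_sq_add]
    push_cast
    ring
  have hkepler : logDeriv (fun r => (2 * r ^ 2 + b) / (2 * r ^ 5)) R
      = 2 * 2 * R / (2 * R ^ 2 + b) - 5 / R := by
    rw [logDeriv_div R hb h5 (by fun_prop) (by fun_prop), logDeriv_mul_sq_add,
      logDeriv_const_mul R _ two_ne_zero, logDeriv_pow]
    norm_num
  rw [logDeriv_mul (f := fun r => (a + r ^ 2) ^ 2) (g := fun r => (2 * r ^ 2 + b) / (2 * r ^ 5)) R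
      (by positivity) (by positivity) (by fun_prop) (by fun_prop (disch := exact h5)), hsq, hkepler]
  field_simp
  ring

theorem stmt8_general (I₁ I₂ : ℝ) (hI₁ : 0 < I₁) (hI₂' : I₂ < 1 / 3) :
    ∀ R : ℝ, 0 < R →
      ((3 * R ^ 2 - I₁) / (R ^ 2 + I₁) - 4
          + 2 / (R ^ 3 * ((2 * R ^ 2 + 3 - 9 * I₂) / (2 * R ^ 5)))
        = R * deriv (fun r : ℝ => (I₁ + r ^ 2) ^ 2 * ((2 * r ^ 2 + 3 - 9 * I₂) / (2 * r ^ 5))) R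
          / ((I₁ + R ^ 2) ^ 2 * ((2 * R ^ 2 + 3 - 9 * I₂) / (2 * R ^ 5)))) ∧
      ((3 * R ^ 2 - I₁) / (R ^ 2 + I₁) - 4
          + 2 / (R ^ 3 * ((2 * R ^ 2 + 3 - 9 * I₂) / (2 * R ^ 5))) = 0 ↔
        deriv (fun r : ℝ => (I₁ + r ^ 2) ^ 2 * ((2 * r ^ 2 + 3 - 9 * I₂) / (2 * r ^ 5))) R
          = 0) := by
  intro R hR
  have hR0 : R ≠ 0 := hR.ne'
  have hI : I₁ + R ^ 2 ≠ 0 := by positivity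
  have hK : 2 * R ^ 2 + (3 - 9 * I₂) ≠ 0 := by nlinarith [sq_nonneg R]
  simp only [add_sub_assoc]
  have hm : (I₁ + R ^ 2) ^ 2 * ((2 * R ^ 2 + (3 - 9 * I₂)) / (2 * R ^ 5)) ≠ 0 := by
    positivity
  have hlog := mul_logDeriv_angularMomentumSq I₁ (3 - 9 * I₂) R hR0 hI hK
  rw [logDeriv_apply, ← mul_div_assoc] at hlog
  have hSmale : (3 * R ^ 2 - I₁) / (R ^ 2 + I₁) - 4
      + 2 / (R ^ 3 * ((2 * R ^ 2 + (3 - 9 * I₂)) / (2 * R ^ 5)))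
      = 4 * R ^ 2 / (I₁ + R ^ 2) + 4 * R ^ 2 / (2 * R ^ 2 + (3 - 9 * I₂)) - 5 := by
    field_simp
    ring
  rw [hSmale, ← hlog]
  exact ⟨rfl, by simp [hR0, hm]⟩

theorem stmt8 (I₁ I₂ : ℝ) (hI₁ : 0 < I₁) (hI₂ : 0 < I₂) (hI₂' : I₂ < 1 / 3) :
    ∀ R : ℝ, 0 < R →
      ((3 * R ^ 2 - I₁) / (R ^ 2 + I₁) - 4
          + 2 / (R ^ 3 * ((2 * R ^ 2 + 3 - 9 * I₂) / (2 * R ^ 5)))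
        = R * deriv (fun r : ℝ => (I₁ + r ^ 2) ^ 2 * ((2 * r ^ 2 + 3 - 9 * I₂) / (2 * r ^ 5))) R
          / ((I₁ + R ^ 2) ^ 2 * ((2 * R ^ 2 + 3 - 9 * I₂) / (2 * R ^ 5)))) ∧
      ((3 * R ^ 2 - I₁) / (R ^ 2 + I₁) - 4
          + 2 / (R ^ 3 * ((2 * R ^ 2 + 3 - 9 * I₂) / (2 * R ^ 5))) = 0 ↔
        deriv (fun r : ℝ => (I₁ + r ^ 2) ^ 2 * ((2 * r ^ 2 + 3 - 9 * I₂) / (2 * r ^ 5))) R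
          = 0) :=
  stmt8_general I₁ I₂ hI₁ hI₂'
end
end

section
/- Parallel equilibria are not formally stable: let I₁, I₂, I₃ > 0 with I₁ + I₂ + I₃ = 1 and I₂ > 1/3, and let ξ₂ ≠ 0. Then the denominators 9I₂ + 2I₃ − 3 and 2I₁ + 9I₂ − 3 are positive, and the two Arnold-form eigenvalues A₁ = −ξ₂² I₂ (7I₂ + 2I₃ − 3)/(9I₂ + 2I₃ − 3) and A₂ = −ξ₂² I₂ (7I₂ + 2I₁ − 3)/(2I₁ + 9I₂ − 3) are not both positive. -/
/-! When both Arnold eigenvalues are positive, their denominators being positive and the prefactor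
`-ξ₂² I₂` nonpositive force both numerators `7 I₂ + 2 I₃ - 3` and `7 I₂ + 2 I₁ - 3` to be negative.
Their sum is `12 I₂ - 4` by `I₁ + I₂ + I₃ = 1`, which is positive as `I₂ > 1/3`. -/

lemma neg_of_mul_div_pos {a n d : ℝ} (ha : a ≤ 0) (hd : 0 < d) (h : 0 < a * n / d) : n < 0 :=
  neg_of_mul_pos_right ((div_pos_iff_of_pos_right hd).mp h) ha

theorem stmt9_general (I₁ I₂ I₃ : ℝ)
    (hI₁ : 0 < I₁) (hI₃ : 0 < I₃)
    (hsum : I₁ + I₂ + I₃ = 1) (hI₂' : I₂ > 1 / 3)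
    (ξ₂ : ℝ) :
    0 < 9 * I₂ + 2 * I₃ - 3 ∧ 0 < 2 * I₁ + 9 * I₂ - 3 ∧
    ¬ (0 < -ξ₂ ^ 2 * I₂ * (7 * I₂ + 2 * I₃ - 3) / (9 * I₂ + 2 * I₃ - 3) ∧
       0 < -ξ₂ ^ 2 * I₂ * (7 * I₂ + 2 * I₁ - 3) / (2 * I₁ + 9 * I₂ - 3)) := by
  have hd₁ : 0 < 9 * I₂ + 2 * I₃ - 3 := by linarith
  have hd₂ : 0 < 2 * I₁ + 9 * I₂ - 3 := by linarith
  refine ⟨hd₁, hd₂, fun ⟨h₁, h₂⟩ => ?_⟩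
  have hprefactor : -ξ₂ ^ 2 * I₂ ≤ 0 :=
    mul_nonpos_of_nonpos_of_nonneg (neg_nonpos.mpr (sq_nonneg ξ₂)) (by linarith)
  have hn₁ := neg_of_mul_div_pos hprefactor hd₁ h₁
  have hn₂ := neg_of_mul_div_pos hprefactor hd₂ h₂
  linarith

theorem stmt9 (I₁ I₂ I₃ : ℝ)
    (hI₁ : 0 < I₁) (hI₂ : 0 < I₂) (hI₃ : 0 < I₃)
    (hsum : I₁ + I₂ + I₃ = 1) (hI₂' : I₂ > 1 / 3)
    (ξ₂ : ℝ) (hξ₂ : ξ₂ ≠ 0) :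
    0 < 9 * I₂ + 2 * I₃ - 3 ∧ 0 < 2 * I₁ + 9 * I₂ - 3 ∧
    ¬ (0 < -ξ₂ ^ 2 * I₂ * (7 * I₂ + 2 * I₃ - 3) / (9 * I₂ + 2 * I₃ - 3) ∧
       0 < -ξ₂ ^ 2 * I₂ * (7 * I₂ + 2 * I₁ - 3) / (2 * I₁ + 9 * I₂ - 3)) :=
  stmt9_general I₁ I₂ I₃ hI₁ hI₃ hsum hI₂' ξ₂
end

section
/- Existence of the orthogonal axisymmetric families: for any R > 0, each of the following is an axisymmetric relative equilibrium triple: (a) cylindrical: 𝐑 = (0,R,0), ξ = (ω,0,0), with any η ∈ ℝ, provided ω² = (2R² + 3 − 9I₂)/(2R⁵); (b) hyperbolic: 𝐑 = (0,R,0), ξ = ω(sin θ, 0, cos θ) for any θ, with η = −((I₂−I₁)/I₁) ω sin θ, provided ω² = (2R² + 3 − 9I₂)/(2R⁵); (c) isolated: 𝐑 = (R,0,0), ξ = (0,ω,0), η = 0, provided ω² = (2R² + 3 − 9I₁)/(2R⁵). -/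
noncomputable section

open Real

/-- The cross product on `ℝ³`. -/
def cross3 (u v : Fin 3 → ℝ) : Fin 3 → ℝ :=
  ![u 1 * v 2 - u 2 * v 1, u 2 * v 0 - u 0 * v 2, u 0 * v 1 - u 1 * v 0]

/-- `(𝐑, ξ, η)` is an axisymmetric relative equilibrium triple for the inertia tensor
`𝐈 = diag (I₁, I₂, I₂)`: `𝐑 ≠ 0`, `ξ × (𝐈ξ − (𝐑·ξ)𝐑 − I₁ η e₁) = 0` and
`∇V₂(𝐑) = −(𝐑·ξ)ξ + |ξ|²𝐑`. -/
def IsAxiRelEq (I₁ I₂ : ℝ) (R ξ : Fin 3 → ℝ) (η : ℝ) : Prop :=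
  R ≠ 0 ∧
  cross3 ξ (fun i => (inertiaApply I₁ I₂ I₂ ξ) i - (dot3 R ξ) * R i - I₁ * η * e3 0 i) = 0 ∧
  (∀ i, gradV2 I₁ I₂ I₂ R i = -(dot3 R ξ) * ξ i + (dot3 ξ ξ) * R i)

/-!
In all three families `𝐑` lies on a principal axis of `𝐈`, with moment `I`, and `ξ ⊥ 𝐑`.
Then `∇V₂(𝐑) = (2R² + 3 − 9I)/(2R⁵) · 𝐑` and `−(𝐑·ξ)ξ + |ξ|²𝐑 = |ξ|²𝐑`, so the gradient
condition is exactly `|ξ|² = ω²`. The cross condition holds because `𝐈ξ − I₁ηe₁` is parallel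
to `ξ`; in the hyperbolic family the value of `η` is chosen to make it equal `I₂ ξ`.
-/

lemma norm3_eq_of_dot3_self {x : Fin 3 → ℝ} {r : ℝ} (hr : 0 ≤ r) (hx : dot3 x x = r ^ 2) :
    norm3 x = r := by
  rw [norm3, hx, Real.sqrt_sq hr]

lemma gradV2_of_inertiaApply_eq_smul {I₁ I₂ I₃ I r : ℝ} {x : Fin 3 → ℝ} (hr : 0 < r)
    (hx : dot3 x x = r ^ 2) (hI : inertiaApply I₁ I₂ I₃ x = I • x) :
    gradV2 I₁ I₂ I₃ x = ((2 * r ^ 2 + 3 - 9 * I) / (2 * r ^ 5)) • x := by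
  have hdot : dot3 x (I • x) = I * r ^ 2 := by
    rw [← hx]
    simp only [dot3, Pi.smul_apply, smul_eq_mul]
    ring
  funext i
  simp only [gradV2, hI, hdot, norm3_eq_of_dot3_self hr.le hx, Pi.smul_apply, smul_eq_mul]
  field_simp
  ring

lemma isAxiRelEq_of_orthogonal {I₁ I₂ I r η : ℝ} {x ξ : Fin 3 → ℝ} (hr : 0 < r)
    (hx : dot3 x x = r ^ 2) (hI : inertiaApply I₁ I₂ I₂ x = I • x) (horth : dot3 x ξ = 0)
    (hξ : dot3 ξ ξ = (2 * r ^ 2 + 3 - 9 * I) / (2 * r ^ 5))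
    (hcross : cross3 ξ (fun i => inertiaApply I₁ I₂ I₂ ξ i - I₁ * η * e3 0 i) = 0) :
    IsAxiRelEq I₁ I₂ x ξ η := by
  refine ⟨?_, by simpa [horth] using hcross, fun i => ?_⟩
  · rintro rfl
    simp only [dot3, Pi.zero_apply, mul_zero, add_zero] at hx
    exact hr.ne' (pow_eq_zero_iff two_ne_zero |>.mp hx.symm)
  · rw [gradV2_of_inertiaApply_eq_smul hr hx hI, horth, hξ]
    simp

theorem stmt11_general (I₁ I₂ : ℝ)
    (hI₁ : 0 < I₁)
    (R : ℝ) (hR : 0 < R) :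
    (∀ ω η : ℝ, ω ^ 2 = (2 * R ^ 2 + 3 - 9 * I₂) / (2 * R ^ 5) →
      IsAxiRelEq I₁ I₂ ![0, R, 0] ![ω, 0, 0] η) ∧
    (∀ ω θ : ℝ, ω ^ 2 = (2 * R ^ 2 + 3 - 9 * I₂) / (2 * R ^ 5) →
      IsAxiRelEq I₁ I₂ ![0, R, 0] ![ω * Real.sin θ, 0, ω * Real.cos θ]
        (-((I₂ - I₁) / I₁) * ω * Real.sin θ)) ∧
    (∀ ω : ℝ, ω ^ 2 = (2 * R ^ 2 + 3 - 9 * I₁) / (2 * R ^ 5) →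
      IsAxiRelEq I₁ I₂ ![R, 0, 0] ![0, ω, 0] 0) := by
  have hR₂ : dot3 ![0, R, 0] ![0, R, 0] = R ^ 2 := by simp [dot3, sq]
  have hR₁ : dot3 ![R, 0, 0] ![R, 0, 0] = R ^ 2 := by simp [dot3, sq]
  have hI₂axis : inertiaApply I₁ I₂ I₂ ![0, R, 0] = I₂ • ![0, R, 0] := by
    funext i; fin_cases i <;> simp [inertiaApply]
  have hI₁axis : inertiaApply I₁ I₂ I₂ ![R, 0, 0] = I₁ • ![R, 0, 0] := by
    funext i; fin_cases i <;> simp [inertiaApply]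
  refine ⟨fun ω η hω => ?_, fun ω θ hω => ?_, fun ω hω => ?_⟩
  · refine isAxiRelEq_of_orthogonal hR hR₂ hI₂axis (by simp [dot3])
      (by rw [← hω]; simp [dot3, sq]) ?_
    funext i; fin_cases i <;> simp [cross3, inertiaApply, e3]
  · refine isAxiRelEq_of_orthogonal hR hR₂ hI₂axis (by simp [dot3]) ?_ ?_
    · rw [← hω]
      simp only [dot3, Matrix.cons_val_zero, Matrix.cons_val_one, Matrix.cons_val, mul_zero,
        add_zero]
      linear_combination ω ^ 2 * Real.sin_sq_add_cos_sq θ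
    · funext i; fin_cases i <;> simp [cross3, inertiaApply, e3]
      field_simp
      ring
  · refine isAxiRelEq_of_orthogonal hR hR₁ hI₁axis (by simp [dot3])
      (by rw [← hω]; simp [dot3, sq]) ?_
    funext i; fin_cases i <;> simp [cross3, inertiaApply, e3]

theorem stmt11 (I₁ I₂ : ℝ)
    (hI₁ : 0 < I₁) (hI₂ : 0 < I₂) (hne : I₁ ≠ I₂) (hsum : I₁ + 2 * I₂ = 1)
    (R : ℝ) (hR : 0 < R) :
    (∀ ω η : ℝ, ω ^ 2 = (2 * R ^ 2 + 3 - 9 * I₂) / (2 * R ^ 5) →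
      IsAxiRelEq I₁ I₂ ![0, R, 0] ![ω, 0, 0] η) ∧
    (∀ ω θ : ℝ, ω ^ 2 = (2 * R ^ 2 + 3 - 9 * I₂) / (2 * R ^ 5) →
      IsAxiRelEq I₁ I₂ ![0, R, 0] ![ω * Real.sin θ, 0, ω * Real.cos θ]
        (-((I₂ - I₁) / I₁) * ω * Real.sin θ)) ∧
    (∀ ω : ℝ, ω ^ 2 = (2 * R ^ 2 + 3 - 9 * I₁) / (2 * R ^ 5) →
      IsAxiRelEq I₁ I₂ ![R, 0, 0] ![0, ω, 0] 0) :=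
  stmt11_general I₁ I₂ hI₁ R hR
end
end

section
/- Stability conditions for cylindrical equilibria: let I₁, I₂ > 0, α ∈ ℝ, R > 0 and ξ₁ ≠ 0, and define A₁ = ξ₁²((1+α)I₁+R²)(I₁(1+α)−I₂)/(I₂+R²), A₂ = ξ₁²((1+α)I₁+R²)(I₁(1+α)+R²−I₂)/(I₂+R²), S₁ = ((R²+I₁(1+α)−I₂)/R⁵)·(2R²((4+α)I₁−4I₂) + 3(I₁−I₂)(I₁(1+α)−I₂)), and S₂ = ξ₁². If R² > −(1+α)I₁, I₁(1+α) > I₂, and I₁(4+α) − 4I₂ > −(3/(2R²))(I₁−I₂)(I₁(1+α)−I₂), then A₁, A₂, S₁, S₂ are all positive. -/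
theorem mul_add_pos_of_neg_div_lt {a b x : ℝ} (ha : 0 < a) (h : -(b / a) < x) :
    0 < a * x + b := by
  have hpos : 0 < a * (x + b / a) := mul_pos ha (by linarith)
  rwa [mul_add, mul_div_cancel₀ _ ha.ne'] at hpos

theorem stmt15_general (I₁ I₂ α R ξ₁ : ℝ)
    (hI₂ : 0 < I₂) (hR : 0 < R) (hξ₁ : ξ₁ ≠ 0)
    (h1 : R ^ 2 > -(1 + α) * I₁)
    (h2 : I₁ * (1 + α) > I₂)
    (h3 : I₁ * (4 + α) - 4 * I₂ > -(3 / (2 * R ^ 2)) * (I₁ - I₂) * (I₁ * (1 + α) - I₂)) :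
    0 < ξ₁ ^ 2 * ((1 + α) * I₁ + R ^ 2) * (I₁ * (1 + α) - I₂) / (I₂ + R ^ 2) ∧
    0 < ξ₁ ^ 2 * ((1 + α) * I₁ + R ^ 2) * (I₁ * (1 + α) + R ^ 2 - I₂) / (I₂ + R ^ 2) ∧
    0 < ((R ^ 2 + I₁ * (1 + α) - I₂) / R ^ 5) *
        (2 * R ^ 2 * ((4 + α) * I₁ - 4 * I₂) + 3 * (I₁ - I₂) * (I₁ * (1 + α) - I₂)) ∧
    0 < ξ₁ ^ 2 := by
  have hξ : 0 < ξ₁ ^ 2 := by positivity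
  have hR2 : 0 < R ^ 2 := by positivity
  have hprefactor : 0 < ξ₁ ^ 2 * ((1 + α) * I₁ + R ^ 2) := mul_pos hξ (by linarith)
  have hden : 0 < I₂ + R ^ 2 := by linarith
  have hbracket :
      0 < 2 * R ^ 2 * ((4 + α) * I₁ - 4 * I₂) + 3 * (I₁ - I₂) * (I₁ * (1 + α) - I₂) := by
    refine mul_add_pos_of_neg_div_lt (by positivity) ?_
    convert h3 using 1 <;> ring
  exact ⟨div_pos (mul_pos hprefactor (by linarith)) hden,
    div_pos (mul_pos hprefactor (by linarith)) hden,
    mul_pos (div_pos (by linarith) (by positivity)) hbracket, hξ⟩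

theorem stmt15 (I₁ I₂ α R ξ₁ : ℝ)
    (hI₁ : 0 < I₁) (hI₂ : 0 < I₂) (hR : 0 < R) (hξ₁ : ξ₁ ≠ 0)
    (h1 : R ^ 2 > -(1 + α) * I₁)
    (h2 : I₁ * (1 + α) > I₂)
    (h3 : I₁ * (4 + α) - 4 * I₂ > -(3 / (2 * R ^ 2)) * (I₁ - I₂) * (I₁ * (1 + α) - I₂)) :
    0 < ξ₁ ^ 2 * ((1 + α) * I₁ + R ^ 2) * (I₁ * (1 + α) - I₂) / (I₂ + R ^ 2) ∧
    0 < ξ₁ ^ 2 * ((1 + α) * I₁ + R ^ 2) * (I₁ * (1 + α) + R ^ 2 - I₂) / (I₂ + R ^ 2) ∧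
    0 < ((R ^ 2 + I₁ * (1 + α) - I₂) / R ^ 5) *
        (2 * R ^ 2 * ((4 + α) * I₁ - 4 * I₂) + 3 * (I₁ - I₂) * (I₁ * (1 + α) - I₂)) ∧
    0 < ξ₁ ^ 2 :=
  stmt15_general I₁ I₂ α R ξ₁ hI₂ hR hξ₁ h1 h2 h3
end

section
/- Oblate cylindrical equilibria with positive spin are stable for all radii: if I₁ > I₂ > 0 (oblate body) and α > 0, then for every R > 0 the three inequalities R² > −(1+α)I₁, I₁(1+α) > I₂, and I₁(4+α) − 4I₂ > −(3/(2R²))(I₁−I₂)(I₁(1+α)−I₂) all hold. -/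
noncomputable section

theorem stmt16 (I₁ I₂ α : ℝ)
    (hI₂ : 0 < I₂) (hob : I₁ > I₂) (hα : 0 < α) :
    ∀ R : ℝ, 0 < R →
      R ^ 2 > -(1 + α) * I₁ ∧
      I₁ * (1 + α) > I₂ ∧
      I₁ * (4 + α) - 4 * I₂ > -(3 / (2 * R ^ 2)) * (I₁ - I₂) * (I₁ * (1 + α) - I₂) := by
  intro R hR
  have hI₁ : 0 < I₁ := hI₂.trans hob
  have hgap : 0 < I₁ - I₂ := sub_pos.mpr hob
  have hspin : 0 < I₁ * (1 + α) - I₂ := by nlinarith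
  refine ⟨?_, sub_pos.mp hspin, ?_⟩
  · have hneg : -(1 + α) * I₁ < 0 := by nlinarith
    linarith [pow_pos hR 2]
  · have hprod : 0 < 3 / (2 * R ^ 2) * (I₁ - I₂) * (I₁ * (1 + α) - I₂) := by positivity
    calc -(3 / (2 * R ^ 2)) * (I₁ - I₂) * (I₁ * (1 + α) - I₂) < 0 := by linarith
      _ < I₁ * α + 4 * (I₁ - I₂) := by positivity
      _ = I₁ * (4 + α) - 4 * I₂ := by ring
end
end

section
/- Stability of hyperbolic equilibria: let 0 < I₂ < 1/2, I₁ = 1 − 2I₂ > 0, R > √2, θ with cos θ ≠ 0, and ω ≠ 0. Define A₁ = (R²+I₂)ω²cos²θ·I₂/R², A₂ = (ω²R²(R²+I₂)/I₂)(R⁴ + 2R²I₂cos²θ + I₂²cos⁴θ), S₁ = 3(I₁−I₂)(R²+I₂cos²θ)²(R²+I₂)²/R⁵, and S₂ = 2R⁴ − 3R²(I₁+I₂) + 15I₂(I₂−I₁). Then A₁ > 0, A₂ > 0, S₂ > 0, and S₁ > 0 if and only if I₁ > I₂ (so for R > √2 hyperbolic equilibria satisfy all stability conditions exactly when the body is oblate,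 and have exactly one negative eigenvalue, hence are unstable, when the body is prolate). -/
theorem two_lt_sq_of_sqrt_two_lt {R : ℝ} (hR : √2 < R) : 2 < R ^ 2 :=
  (Real.sqrt_lt' ((Real.sqrt_nonneg 2).trans_lt hR)).1 hR

theorem smale_S₂_pos {I₁ I₂ R : ℝ} (hI₂ : 0 < I₂) (hI₁ : I₁ = 1 - 2 * I₂) (hR : 2 < R ^ 2) :
    0 < 2 * R ^ 4 - 3 * R ^ 2 * (I₁ + I₂) + 15 * I₂ * (I₂ - I₁) := by
  have hS₂ : 2 * R ^ 4 - 3 * R ^ 2 * (I₁ + I₂) + 15 * I₂ * (I₂ - I₁) =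
      (R ^ 2 - 2) * (2 * R ^ 2 + 1 + 3 * I₂) + (45 * (I₂ - 1 / 10) ^ 2 + 31 / 20) := by
    subst hI₁; ring
  rw [hS₂]
  have hfactor : 0 < (R ^ 2 - 2) * (2 * R ^ 2 + 1 + 3 * I₂) :=
    mul_pos (sub_pos.2 hR) (by positivity)
  positivity

theorem smale_S₁_pos_iff {I₁ I₂ R c : ℝ} (hI₂ : 0 < I₂) (hR : 0 < R) :
    0 < 3 * (I₁ - I₂) * (R ^ 2 + I₂ * c ^ 2) ^ 2 * (R ^ 2 + I₂) ^ 2 / R ^ 5 ↔ I₂ < I₁ := by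
  have hfactor : 0 < 3 * (R ^ 2 + I₂ * c ^ 2) ^ 2 * (R ^ 2 + I₂) ^ 2 / R ^ 5 := by positivity
  have hS₁ : 3 * (I₁ - I₂) * (R ^ 2 + I₂ * c ^ 2) ^ 2 * (R ^ 2 + I₂) ^ 2 / R ^ 5 =
      (I₁ - I₂) * (3 * (R ^ 2 + I₂ * c ^ 2) ^ 2 * (R ^ 2 + I₂) ^ 2 / R ^ 5) := by ring
  rw [hS₁, mul_pos_iff_of_pos_right hfactor, sub_pos]

theorem stmt17_general (I₁ I₂ R θ ω : ℝ)
    (hI₂ : 0 < I₂) (hI₁ : I₁ = 1 - 2 * I₂)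
    (hR : R > Real.sqrt 2) (hθ : Real.cos θ ≠ 0) (hω : ω ≠ 0) :
    0 < (R ^ 2 + I₂) * ω ^ 2 * (Real.cos θ) ^ 2 * I₂ / R ^ 2 ∧
    0 < (ω ^ 2 * R ^ 2 * (R ^ 2 + I₂) / I₂) *
        (R ^ 4 + 2 * R ^ 2 * I₂ * (Real.cos θ) ^ 2 + I₂ ^ 2 * (Real.cos θ) ^ 4) ∧
    0 < 2 * R ^ 4 - 3 * R ^ 2 * (I₁ + I₂) + 15 * I₂ * (I₂ - I₁) ∧
    (0 < 3 * (I₁ - I₂) * (R ^ 2 + I₂ * (Real.cos θ) ^ 2) ^ 2 * (R ^ 2 + I₂) ^ 2 / R ^ 5 ↔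
      I₁ > I₂) := by
  have hRpos : 0 < R := (Real.sqrt_nonneg 2).trans_lt hR
  exact ⟨by positivity, by positivity, smale_S₂_pos hI₂ hI₁ (two_lt_sq_of_sqrt_two_lt hR),
    smale_S₁_pos_iff hI₂ hRpos⟩

theorem stmt17 (I₁ I₂ R θ ω : ℝ)
    (hI₂ : 0 < I₂) (hI₂' : I₂ < 1 / 2) (hI₁ : I₁ = 1 - 2 * I₂) (hI₁pos : 0 < I₁)
    (hR : R > Real.sqrt 2) (hθ : Real.cos θ ≠ 0) (hω : ω ≠ 0) :
    0 < (R ^ 2 + I₂) * ω ^ 2 * (Real.cos θ) ^ 2 * I₂ / R ^ 2 ∧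
    0 < (ω ^ 2 * R ^ 2 * (R ^ 2 + I₂) / I₂) *
        (R ^ 4 + 2 * R ^ 2 * I₂ * (Real.cos θ) ^ 2 + I₂ ^ 2 * (Real.cos θ) ^ 4) ∧
    0 < 2 * R ^ 4 - 3 * R ^ 2 * (I₁ + I₂) + 15 * I₂ * (I₂ - I₁) ∧
    (0 < 3 * (I₁ - I₂) * (R ^ 2 + I₂ * (Real.cos θ) ^ 2) ^ 2 * (R ^ 2 + I₂) ^ 2 / R ^ 5 ↔
      I₁ > I₂) :=
  stmt17_general I₁ I₂ R θ ω hI₂ hI₁ hR hθ hω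
end

section
/- Stability of isolated equilibria: let I₁, I₂ > 0 and R > 0 satisfy the large-orbit condition R⁴ + 3R²(I₁ − 2I₂) + 15I₂(I₁ − I₂) > 0, and define H₁ = (R⁴ + 3R²(I₁−2I₂) + 15I₂(I₁−I₂))/(R⁵(R²+I₂)), H₂ = 3(I₂−I₁)(R²+I₂)²/R⁵, and H₃ = (R²(4I₂−3I₁) − 6I₂(I₁−I₂))(R²+I₂)/R⁵. If I₁ < I₂ (prolate body) then H₁, H₂, H₃ are all positive. If I₁ > I₂ and R²(4I₂−3I₁) > 6I₂(I₁−I₂), then H₂ < 0 while H₁ > 0 and H₃ > 0 (exactly one negative eigenvalue). -/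
/-! Since `R > 0` and `I₂ > 0`, each `Hᵢ` is a positive multiple of one factor of its numerator
(the large-orbit polynomial, `I₂ - I₁`, and `R² (4 I₂ - 3 I₁) - 6 I₂ (I₁ - I₂)` respectively),
so every sign claim reduces to the sign of that factor. -/

noncomputable section

namespace AxisymmetricSatellite

def H₁ (I₁ I₂ R : ℝ) : ℝ :=
  (R ^ 4 + 3 * R ^ 2 * (I₁ - 2 * I₂) + 15 * I₂ * (I₁ - I₂)) / (R ^ 5 * (R ^ 2 + I₂))

def H₂ (I₁ I₂ R : ℝ) : ℝ :=
  3 * (I₂ - I₁) * (R ^ 2 + I₂) ^ 2 / R ^ 5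

def H₃ (I₁ I₂ R : ℝ) : ℝ :=
  (R ^ 2 * (4 * I₂ - 3 * I₁) - 6 * I₂ * (I₁ - I₂)) * (R ^ 2 + I₂) / R ^ 5

variable {I₁ I₂ R : ℝ}

theorem H₁_pos_iff (hI₂ : 0 ≤ I₂) (hR : 0 < R) :
    0 < H₁ I₁ I₂ R ↔ 0 < R ^ 4 + 3 * R ^ 2 * (I₁ - 2 * I₂) + 15 * I₂ * (I₁ - I₂) :=
  div_pos_iff_of_pos_right (by positivity)

theorem H₂_pos_iff (hI₂ : 0 ≤ I₂) (hR : 0 < R) : 0 < H₂ I₁ I₂ R ↔ I₁ < I₂ := by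
  have hscale : 0 < 3 * (R ^ 2 + I₂) ^ 2 := by positivity
  rw [H₂, div_pos_iff_of_pos_right (by positivity), mul_right_comm, mul_pos_iff_of_pos_left hscale,
    sub_pos]

theorem H₂_neg_iff (hI₂ : 0 ≤ I₂) (hR : 0 < R) : H₂ I₁ I₂ R < 0 ↔ I₂ < I₁ := by
  have hscale : 0 < 3 * (R ^ 2 + I₂) ^ 2 := by positivity
  rw [H₂, div_lt_iff₀ (by positivity), zero_mul, mul_right_comm, ← neg_pos, ← mul_neg,
    mul_pos_iff_of_pos_left hscale, neg_sub, sub_pos]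

theorem H₃_pos_iff (hI₂ : 0 ≤ I₂) (hR : 0 < R) :
    0 < H₃ I₁ I₂ R ↔ 6 * I₂ * (I₁ - I₂) < R ^ 2 * (4 * I₂ - 3 * I₁) := by
  rw [H₃, div_pos_iff_of_pos_right (by positivity), mul_pos_iff_of_pos_right (by positivity),
    sub_pos]

/-- For a prolate body both `4 I₂ - 3 I₁ = I₂ + 3 (I₂ - I₁)` and `I₂ - I₁` are positive. -/
theorem H₃_pos_of_lt (hI₂ : 0 < I₂) (hR : 0 < R) (h : I₁ < I₂) : 0 < H₃ I₁ I₂ R := by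
  rw [H₃_pos_iff hI₂.le hR]
  have hcoeff : 0 ≤ R ^ 2 * (4 * I₂ - 3 * I₁) := mul_nonneg (sq_nonneg R) (by linarith)
  linarith [mul_pos hI₂ (sub_pos.mpr h)]

end AxisymmetricSatellite

open AxisymmetricSatellite in
theorem stmt18_general (I₁ I₂ R : ℝ)
    (hI₂ : 0 < I₂) (hR : 0 < R)
    (hlarge : R ^ 4 + 3 * R ^ 2 * (I₁ - 2 * I₂) + 15 * I₂ * (I₁ - I₂) > 0) :
    (I₁ < I₂ →
      0 < (R ^ 4 + 3 * R ^ 2 * (I₁ - 2 * I₂) + 15 * I₂ * (I₁ - I₂)) / (R ^ 5 * (R ^ 2 + I₂)) ∧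
      0 < 3 * (I₂ - I₁) * (R ^ 2 + I₂) ^ 2 / R ^ 5 ∧
      0 < (R ^ 2 * (4 * I₂ - 3 * I₁) - 6 * I₂ * (I₁ - I₂)) * (R ^ 2 + I₂) / R ^ 5) ∧
    (I₁ > I₂ → R ^ 2 * (4 * I₂ - 3 * I₁) > 6 * I₂ * (I₁ - I₂) →
      3 * (I₂ - I₁) * (R ^ 2 + I₂) ^ 2 / R ^ 5 < 0 ∧
      0 < (R ^ 4 + 3 * R ^ 2 * (I₁ - 2 * I₂) + 15 * I₂ * (I₁ - I₂)) / (R ^ 5 * (R ^ 2 + I₂)) ∧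
      0 < (R ^ 2 * (4 * I₂ - 3 * I₁) - 6 * I₂ * (I₁ - I₂)) * (R ^ 2 + I₂) / R ^ 5) := by
  have hH₁ : 0 < H₁ I₁ I₂ R := (H₁_pos_iff hI₂.le hR).mpr hlarge
  refine ⟨fun hprolate => ⟨hH₁, ?_, ?_⟩, fun hoblate hcond => ⟨?_, hH₁, ?_⟩⟩
  · exact (H₂_pos_iff hI₂.le hR).mpr hprolate
  · exact H₃_pos_of_lt hI₂ hR hprolate
  · exact (H₂_neg_iff hI₂.le hR).mpr hoblate
  · exact (H₃_pos_iff hI₂.le hR).mpr hcond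

theorem stmt18 (I₁ I₂ R : ℝ)
    (hI₁ : 0 < I₁) (hI₂ : 0 < I₂) (hR : 0 < R)
    (hlarge : R ^ 4 + 3 * R ^ 2 * (I₁ - 2 * I₂) + 15 * I₂ * (I₁ - I₂) > 0) :
    (I₁ < I₂ →
      0 < (R ^ 4 + 3 * R ^ 2 * (I₁ - 2 * I₂) + 15 * I₂ * (I₁ - I₂)) / (R ^ 5 * (R ^ 2 + I₂)) ∧
      0 < 3 * (I₂ - I₁) * (R ^ 2 + I₂) ^ 2 / R ^ 5 ∧
      0 < (R ^ 2 * (4 * I₂ - 3 * I₁) - 6 * I₂ * (I₁ - I₂)) * (R ^ 2 + I₂) / R ^ 5) ∧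
    (I₁ > I₂ → R ^ 2 * (4 * I₂ - 3 * I₁) > 6 * I₂ * (I₁ - I₂) →
      3 * (I₂ - I₁) * (R ^ 2 + I₂) ^ 2 / R ^ 5 < 0 ∧
      0 < (R ^ 4 + 3 * R ^ 2 * (I₁ - 2 * I₂) + 15 * I₂ * (I₁ - I₂)) / (R ^ 5 * (R ^ 2 + I₂)) ∧
      0 < (R ^ 2 * (4 * I₂ - 3 * I₁) - 6 * I₂ * (I₁ - I₂)) * (R ^ 2 + I₂) / R ^ 5) :=
  stmt18_general I₁ I₂ R hI₂ hR hlarge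
end
end
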